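/- arXiv:2102.02876 — 2 statements merged into one kernel-verified Lean document; each statement's English description precedes it below -/
import Mathlib

section
/- Let ζ : G → (0,∞) be twice continuously differentiable on an open set G ⊆ ℝ², and let G' := {z ∈ G : ∂_x∂_y log ζ(z) ≠ 0}. If O ⊆ G' is symmetric (invariant under the transposition τ(u,v) = (v,u)), open and convex, then the restriction of ∂_x∂_y log ζ to O is separable and symmetric if and only if the restriction of ζ to O is pseudo-Gaussian. -/
/-!
Write `Λ = log ζ`. If `ζ` is pseudo-Gaussian, then on a box around a point `(a, b)` of `O` we
have `Λ = α(x) + β(y) + u(x) v(y)`, so `∂_y Λ(x, b) = ∂_y Λ(a, b) + (u(x) - u(a)) v'(b)` and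
`∂ₓ∂_y Λ(a, b) = u'(a) v'(b)`. Since `deriv` is `0` at points of non-differentiability, this
needs no differentiability of `u` or `v`. Hence `∂ₓ∂_y Λ = ±h'(x) h'(y)`, which is separable
and symmetric.

Conversely, if `∂ₓ∂_y Λ = f(x) g(y)` is symmetric and nowhere zero, then `g / f` is locally
constant on the interval `π₁(O)`, so `∂ₓ∂_y Λ = ±F(x) F(y)` with `F` continuous. For a
primitive `H` of `F`, the mixed derivative of `Λ ∓ H(x) H(y)` vanishes on the convex set `O`,
so this function splits as `A(x) + B(y)`, and `ζ = e^A e^B e^{±H H}`.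
-/

open MeasureTheory Set

/-- `ζ` is separable on `G`: a product of a function of `x` and a function of `y`. -/
def SeparableOn (ζ : ℝ × ℝ → ℝ) (G : Set (ℝ × ℝ)) : Prop :=
  ∃ f g : ℝ → ℝ, ∀ p ∈ G, ζ p = f p.1 * g p.2

/-- `ζ` is pseudo-Gaussian on `G`:
`ζ(x,y) = ζ₁(x)·ζ₂(y)·exp(±ζ₃(x)ζ₃(y))` on `G`. -/
def PseudoGaussianOn (ζ : ℝ × ℝ → ℝ) (G : Set (ℝ × ℝ)) : Prop :=
  ∃ (f g h : ℝ → ℝ) (ε : ℝ), (ε = 1 ∨ ε = -1) ∧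
    ∀ p ∈ G, ζ p = f p.1 * g p.2 * Real.exp (ε * (h p.1 * h p.2))

/-- The transposition `τ(u,v) = (v,u)`. -/
def transposeR2 (p : ℝ × ℝ) : ℝ × ℝ := (p.2, p.1)

/-- A set `A ⊆ ℝ²` is symmetric if it is invariant under the transposition. -/
def SymmetricSet (A : Set (ℝ × ℝ)) : Prop := transposeR2 '' A = A

/-- A function is symmetric on `A` if it is invariant under the transposition there. -/
def SymmetricOn (φ : ℝ × ℝ → ℝ) (A : Set (ℝ × ℝ)) : Prop :=
  ∀ p ∈ A, φ (transposeR2 p) = φ p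

/-- The mixed logarithmic derivative `∂ₓ∂_y log ζ`. -/
noncomputable def mld (ζ : ℝ × ℝ → ℝ) (p : ℝ × ℝ) : ℝ :=
  deriv (fun x => deriv (fun y => Real.log (ζ (x, y))) p.2) p.1

open Filter Topology

noncomputable def partialFst (Φ : ℝ × ℝ → ℝ) (p : ℝ × ℝ) : ℝ := deriv (fun x => Φ (x, p.2)) p.1

noncomputable def partialSnd (Φ : ℝ × ℝ → ℝ) (p : ℝ × ℝ) : ℝ := deriv (fun y => Φ (p.1, y)) p.2

theorem mld_eq_partialFst_partialSnd (ζ : ℝ × ℝ → ℝ) :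
    mld ζ = partialFst (partialSnd fun p => Real.log (ζ p)) := rfl

section Partials

variable {Φ : ℝ × ℝ → ℝ} {p : ℝ × ℝ}

theorem hasDerivAt_partialFst_fderiv (h : DifferentiableAt ℝ Φ p) :
    HasDerivAt (fun x => Φ (x, p.2)) (fderiv ℝ Φ p (1, 0)) p.1 :=
  h.hasFDerivAt.comp_hasDerivAt p.1 ((hasDerivAt_id p.1).prodMk (hasDerivAt_const p.1 p.2))

theorem hasDerivAt_partialSnd_fderiv (h : DifferentiableAt ℝ Φ p) :
    HasDerivAt (fun y => Φ (p.1, y)) (fderiv ℝ Φ p (0, 1)) p.2 :=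
  h.hasFDerivAt.comp_hasDerivAt p.2 ((hasDerivAt_const p.2 p.1).prodMk (hasDerivAt_id p.2))

theorem hasDerivAt_partialFst (h : DifferentiableAt ℝ Φ p) :
    HasDerivAt (fun x => Φ (x, p.2)) (partialFst Φ p) p.1 :=
  (hasDerivAt_partialFst_fderiv h).differentiableAt.hasDerivAt

theorem hasDerivAt_partialSnd (h : DifferentiableAt ℝ Φ p) :
    HasDerivAt (fun y => Φ (p.1, y)) (partialSnd Φ p) p.2 :=
  (hasDerivAt_partialSnd_fderiv h).differentiableAt.hasDerivAt

variable {G : Set (ℝ × ℝ)} {m n : WithTop ℕ∞}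

theorem ContDiffOn.partialFst (hΦ : ContDiffOn ℝ n Φ G) (hG : IsOpen G) (hmn : m + 1 ≤ n) :
    ContDiffOn ℝ m (partialFst Φ) G :=
  ((ContinuousLinearMap.apply ℝ ℝ ((1 : ℝ), (0 : ℝ))).contDiff.comp_contDiffOn
    (hΦ.fderiv_of_isOpen hG hmn)).congr fun _p hp =>
      (hasDerivAt_partialFst_fderiv ((hΦ.contDiffAt (hG.mem_nhds hp)).differentiableAt
        (one_pos.trans_le (le_add_self.trans hmn)).ne')).deriv

theorem ContDiffOn.partialSnd (hΦ : ContDiffOn ℝ n Φ G) (hG : IsOpen G) (hmn : m + 1 ≤ n) :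
    ContDiffOn ℝ m (partialSnd Φ) G :=
  ((ContinuousLinearMap.apply ℝ ℝ ((0 : ℝ), (1 : ℝ))).contDiff.comp_contDiffOn
    (hΦ.fderiv_of_isOpen hG hmn)).congr fun _p hp =>
      (hasDerivAt_partialSnd_fderiv ((hΦ.contDiffAt (hG.mem_nhds hp)).differentiableAt
        (one_pos.trans_le (le_add_self.trans hmn)).ne')).deriv

end Partials

section Slices

variable {O : Set (ℝ × ℝ)}

theorem IsOpen.eventually_prodMk_left_mem (hO : IsOpen O) {p : ℝ × ℝ} (hp : p ∈ O) :
    ∀ᶠ x in 𝓝 p.1, (x, p.2) ∈ O :=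
  (continuous_id.prodMk continuous_const).continuousAt.preimage_mem_nhds (hO.mem_nhds hp)

theorem IsOpen.eventually_prodMk_right_mem (hO : IsOpen O) {p : ℝ × ℝ} (hp : p ∈ O) :
    ∀ᶠ y in 𝓝 p.2, (p.1, y) ∈ O :=
  (continuous_const.prodMk continuous_id).continuousAt.preimage_mem_nhds (hO.mem_nhds hp)

theorem Convex.preimage_prodMk_left (hO : Convex ℝ O) (y : ℝ) :
    Convex ℝ {x | (x, y) ∈ O} := by
  intro a ha b hb s t hs ht hst
  simpa [← add_mul, hst] using hO ha hb hs ht hst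

theorem Convex.preimage_prodMk_right (hO : Convex ℝ O) (x : ℝ) :
    Convex ℝ {y | (x, y) ∈ O} := by
  intro a ha b hb s t hs ht hst
  simpa [← add_mul, hst] using hO ha hb hs ht hst

end Slices

theorem IsOpen.eq_of_hasDerivAt_zero {s : Set ℝ} (hs : IsOpen s) (hs' : IsPreconnected s)
    {φ : ℝ → ℝ} (hφ : ∀ t ∈ s, HasDerivAt φ 0 t) {a b : ℝ} (ha : a ∈ s) (hb : b ∈ s) :
    φ a = φ b :=
  hs.is_const_of_deriv_eq_zero hs' (fun t ht => (hφ t ht).differentiableAt.differentiableWithinAt)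
    (fun t ht => (hφ t ht).deriv) ha hb

theorem exists_forall_hasDerivAt_of_continuousOn {X : Set ℝ} (hX : IsOpen X) (hX' : Convex ℝ X)
    {F : ℝ → ℝ} (hF : ContinuousOn F X) : ∃ H : ℝ → ℝ, ∀ x ∈ X, HasDerivAt H (F x) x := by
  rcases X.eq_empty_or_nonempty with rfl | ⟨x₀, hx₀⟩
  · exact ⟨0, by simp⟩
  exact ⟨fun x => ∫ t in x₀..x, F t, fun x hx => intervalIntegral.integral_hasDerivAt_right
    ((hF.mono (hX'.ordConnected.uIcc_subset hx₀ hx)).intervalIntegrable)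
    (hF.stronglyMeasurableAtFilter hX x hx) (hF.continuousAt (hX.mem_nhds hx))⟩

theorem exists_forall_eq_of_forall_eq {ι κ γ : Type*} [Nonempty γ] {P : ι → κ → Prop}
    {φ : ι → κ → γ} (h : ∀ i k k', P i k → P i k' → φ i k = φ i k') :
    ∃ A : ι → γ, ∀ i k, P i k → φ i k = A i := by
  classical
  refine ⟨fun i => if hi : ∃ k, P i k then φ i hi.choose else Classical.arbitrary γ,
    fun i k hk => ?_⟩
  dsimp only
  rw [dif_pos ⟨k, hk⟩]
  exact h i _ _ hk (Exists.choose_spec ⟨k, hk⟩)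

theorem exists_eq_add_of_mixed_deriv_eq_zero {O : Set (ℝ × ℝ)} (hO : IsOpen O)
    (hO' : Convex ℝ O) {Φ D : ℝ × ℝ → ℝ} (hD : ContinuousOn D O)
    (hΦ : ∀ p ∈ O, HasDerivAt (fun y => Φ (p.1, y)) (D p) p.2)
    (hD' : ∀ p ∈ O, HasDerivAt (fun x => D (x, p.2)) 0 p.1) :
    ∃ A B : ℝ → ℝ, ∀ p ∈ O, Φ p = A p.1 + B p.2 := by
  have hslice_left (y : ℝ) : IsOpen {x | (x, y) ∈ O} :=
    hO.preimage (continuous_id.prodMk continuous_const)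
  have hslice_right (x : ℝ) : IsOpen {y | (x, y) ∈ O} :=
    hO.preimage (continuous_const.prodMk continuous_id)
  obtain ⟨V, hV⟩ : ∃ V : ℝ → ℝ, ∀ y x, (x, y) ∈ O → D (x, y) = V y :=
    exists_forall_eq_of_forall_eq fun y x x' hx hx' =>
      (hslice_left y).eq_of_hasDerivAt_zero (hO'.preimage_prodMk_left y).isPreconnected
        (φ := fun t => D (t, y)) (fun t ht => hD' (t, y) ht) hx hx'
  have hVc : ContinuousOn V (Prod.snd '' O) := by
    rintro _ ⟨p, hp, rfl⟩
    have hc : ContinuousAt (fun y => D (p.1, y)) p.2 :=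
      (hD.continuousAt (hO.mem_nhds hp)).comp (continuous_const.prodMk continuous_id).continuousAt
    exact (hc.congr ((hO.eventually_prodMk_right_mem hp).mono fun y hy => hV y p.1 hy))
      |>.continuousWithinAt
  obtain ⟨B, hB⟩ := exists_forall_hasDerivAt_of_continuousOn (isOpenMap_snd O hO)
    (hO'.linear_image (LinearMap.snd ℝ ℝ ℝ)) hVc
  obtain ⟨A, hA⟩ : ∃ A : ℝ → ℝ, ∀ x y, (x, y) ∈ O → Φ (x, y) - B y = A x :=
    exists_forall_eq_of_forall_eq fun x y y' hy hy' =>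
      (hslice_right x).eq_of_hasDerivAt_zero (hO'.preimage_prodMk_right x).isPreconnected
        (φ := fun t => Φ (x, t) - B t) (fun t ht => by
          have h := (hΦ (x, t) ht).sub (hB t ⟨(x, t), ht, rfl⟩)
          rwa [hV t x ht, sub_self] at h) hy hy'
  exact ⟨A, B, fun p hp => by linarith [hA p.1 p.2 hp]⟩

theorem partialFst_partialSnd_eq_of_eq_add_mul {Λ : ℝ × ℝ → ℝ} {α β u v : ℝ → ℝ}
    {I J : Set ℝ} {a b : ℝ} (hI : I ∈ 𝓝 a) (hJ : J ∈ 𝓝 b)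
    (hΛ : ∀ x ∈ I, DifferentiableAt ℝ (fun y => Λ (x, y)) b)
    (hrep : ∀ x ∈ I, ∀ y ∈ J, Λ (x, y) = α x + β y + u x * v y) :
    partialFst (partialSnd Λ) (a, b) = deriv u a * deriv v b := by
  have ha := mem_of_mem_nhds hI
  have hslice : ∀ x ∈ I, partialSnd Λ (x, b) = partialSnd Λ (a, b) + (u x - u a) * deriv v b := by
    intro x hx
    have hsub : (fun y => Λ (x, y) - Λ (a, y)) =ᶠ[𝓝 b] fun y => (α x - α a) + (u x - u a) * v y :=
      eventuallyEq_of_mem hJ fun y hy => by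
        simp only [hrep x hx y hy, hrep a ha y hy]
        ring
    have h : deriv (fun y => Λ (x, y) - Λ (a, y)) b
        = deriv (fun y => Λ (x, y)) b - deriv (fun y => Λ (a, y)) b :=
      deriv_sub (hΛ x hx) (hΛ a ha)
    rw [hsub.deriv_eq, deriv_const_add, deriv_const_mul_field] at h
    change deriv (fun y => Λ (x, y)) b = deriv (fun y => Λ (a, y)) b + _
    linarith
  change deriv (fun x => partialSnd Λ (x, b)) a = _
  rw [(eventuallyEq_of_mem hI hslice).deriv_eq, deriv_const_add, deriv_mul_const_field,
    deriv_sub_const]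

theorem mld_eq_of_eq_mul_exp {O : Set (ℝ × ℝ)} (hO : IsOpen O) {ζ : ℝ × ℝ → ℝ}
    (hζ : ∀ p ∈ O, 0 < ζ p) (hζ' : DifferentiableOn ℝ ζ O) {f g h : ℝ → ℝ} {ε : ℝ}
    (hrep : ∀ p ∈ O, ζ p = f p.1 * g p.2 * Real.exp (ε * (h p.1 * h p.2))) :
    ∀ p ∈ O, mld ζ p = ε * deriv h p.1 * deriv h p.2 := by
  intro p hp
  obtain ⟨I, J, hI, hJ, hpI, hpJ, hIJ⟩ := isOpen_prod_iff.mp hO p.1 p.2 hp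
  have hlog : ∀ x ∈ I, ∀ y ∈ J, Real.log (ζ (x, y))
      = Real.log (f x) + Real.log (g y) + ε * h x * h y := by
    intro x hx y hy
    have hpos := hζ _ (hIJ (mk_mem_prod hx hy))
    rw [hrep _ (hIJ (mk_mem_prod hx hy))] at hpos ⊢
    have hfg : f x * g y ≠ 0 := ((mul_pos_iff_of_pos_right (Real.exp_pos _)).mp hpos).ne'
    rw [Real.log_mul hfg (Real.exp_ne_zero _), Real.log_mul (left_ne_zero_of_mul hfg)
      (right_ne_zero_of_mul hfg), Real.log_exp]
    ring
  have hΛ : DifferentiableOn ℝ (fun q => Real.log (ζ q)) O :=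
    hζ'.log fun q hq => (hζ q hq).ne'
  have hdiff : ∀ x ∈ I, DifferentiableAt ℝ (fun y => Real.log (ζ (x, y))) p.2 := fun x hx =>
    have hxp : (x, p.2) ∈ O := hIJ (mk_mem_prod hx hpJ)
    (hasDerivAt_partialSnd ((hΛ _ hxp).differentiableAt (hO.mem_nhds hxp))).differentiableAt
  calc mld ζ p = partialFst (partialSnd fun q => Real.log (ζ q)) (p.1, p.2) := rfl
    _ = deriv (fun x => ε * h x) p.1 * deriv h p.2 :=
      partialFst_partialSnd_eq_of_eq_add_mul (hI.mem_nhds hpI) (hJ.mem_nhds hpJ) hdiff hlog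
    _ = ε * deriv h p.1 * deriv h p.2 := by rw [deriv_const_mul_field]

theorem SymmetricSet.swap_mem {O : Set (ℝ × ℝ)} (hO : SymmetricSet O) {p : ℝ × ℝ} (hp : p ∈ O) :
    (p.2, p.1) ∈ O :=
  hO ▸ mem_image_of_mem transposeR2 hp

theorem exists_eq_const_mul_of_mul_comm {O : Set (ℝ × ℝ)} (hO : IsOpen O) (hO' : Convex ℝ O)
    (hτ : SymmetricSet O) {f g : ℝ → ℝ} (hfg : ∀ p ∈ O, f p.1 * g p.2 ≠ 0)
    (hcomm : ∀ p ∈ O, f p.2 * g p.1 = f p.1 * g p.2) :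
    ∃ c : ℝ, ∀ p ∈ O, g p.2 = c * f p.2 := by
  have hratio : ∀ p ∈ O, g p.1 / f p.1 = g p.2 / f p.2 := fun p hp => by
    have h₁ := hfg p hp
    have h₂ : f p.2 * g p.1 ≠ 0 := hfg _ (hτ.swap_mem hp)
    rw [div_eq_div_iff (left_ne_zero_of_mul h₁) (left_ne_zero_of_mul h₂)]
    linear_combination hcomm p hp
  -- The ratio `g / f` is locally constant on the projection of `O`, an interval.
  have hderiv : ∀ x ∈ Prod.fst '' O, HasDerivAt (fun x => g x / f x) 0 x := by
    rintro _ ⟨p, hp, rfl⟩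
    refine (hasDerivAt_const p.1 (g p.2 / f p.2)).congr_of_eventuallyEq ?_
    filter_upwards [hO.eventually_prodMk_left_mem hp] with x hx
    exact hratio (x, p.2) hx
  rcases O.eq_empty_or_nonempty with rfl | ⟨p₀, hp₀⟩
  · exact ⟨0, by simp⟩
  refine ⟨g p₀.1 / f p₀.1, fun p hp => ?_⟩
  have hp' := hτ.swap_mem hp
  rw [← (isOpenMap_fst O hO).eq_of_hasDerivAt_zero
    (hO'.linear_image (LinearMap.fst ℝ ℝ ℝ)).isPreconnected hderiv ⟨_, hp', rfl⟩ ⟨p₀, hp₀, rfl⟩,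
    div_mul_cancel₀ _ (left_ne_zero_of_mul (hfg _ hp'))]

theorem exists_sign_mul_mul_self_eq (c : ℝ) : ∃ ε s : ℝ, (ε = 1 ∨ ε = -1) ∧ c = ε * (s * s) := by
  rcases le_total 0 c with hc | hc
  · exact ⟨1, √c, Or.inl rfl, by rw [Real.mul_self_sqrt hc, one_mul]⟩
  · exact ⟨-1, √(-c), Or.inr rfl, by rw [Real.mul_self_sqrt (neg_nonneg.2 hc)]; ring⟩

theorem continuousOn_image_fst_of_eq_mul {O : Set (ℝ × ℝ)} (hO : IsOpen O) {k : ℝ × ℝ → ℝ}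
    {u v : ℝ → ℝ} (hk : ContinuousOn k O) (h : ∀ p ∈ O, k p = u p.1 * v p.2)
    (hv : ∀ p ∈ O, v p.2 ≠ 0) : ContinuousOn u (Prod.fst '' O) := by
  rintro _ ⟨p, hp, rfl⟩
  have hc : ContinuousAt (fun x => k (x, p.2) / v p.2) p.1 :=
    ((hk.continuousAt (hO.mem_nhds hp)).comp
      (continuous_id.prodMk continuous_const).continuousAt).div_const _
  refine (hc.congr ?_).continuousWithinAt
  filter_upwards [hO.eventually_prodMk_left_mem hp] with x hx
  rw [h _ hx, mul_div_cancel_right₀ _ (hv p hp)]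

theorem exists_eq_sign_mul_mul_of_separableOn {O : Set (ℝ × ℝ)} (hO : IsOpen O)
    (hO' : Convex ℝ O) (hτ : SymmetricSet O) {k : ℝ × ℝ → ℝ} (hk : ContinuousOn k O)
    (hk₀ : ∀ p ∈ O, k p ≠ 0) (hsep : SeparableOn k O) (hsymm : SymmetricOn k O) :
    ∃ (ε : ℝ) (F : ℝ → ℝ), (ε = 1 ∨ ε = -1) ∧ ContinuousOn F (Prod.fst '' O) ∧
      ∀ p ∈ O, k p = ε * (F p.1 * F p.2) := by
  obtain ⟨f, g, hfg⟩ := hsep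
  obtain ⟨c, hc⟩ := exists_eq_const_mul_of_mul_comm hO hO' hτ (f := f) (g := g)
    (fun p hp => hfg p hp ▸ hk₀ p hp)
    (fun p hp => (hfg _ (hτ.swap_mem hp)).symm.trans ((hsymm p hp).trans (hfg p hp)))
  obtain ⟨ε, s, hε, rfl⟩ := exists_sign_mul_mul_self_eq c
  have hkF : ∀ p ∈ O, k p = ε * (s * f p.1 * (s * f p.2)) := fun p hp => by
    rw [hfg p hp, hc p hp]
    ring
  refine ⟨ε, fun x => s * f x, hε, continuousOn_image_fst_of_eq_mul hO hk
    (v := fun y => ε * (s * f y)) (fun p hp => by rw [hkF p hp]; ring) fun p hp h₀ => ?_, hkF⟩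
  exact hk₀ p hp (by rw [hkF p hp]; linear_combination s * f p.1 * h₀)

theorem continuousOn_mld {G : Set (ℝ × ℝ)} (hG : IsOpen G) {ζ : ℝ × ℝ → ℝ}
    (hζ : ∀ p ∈ G, 0 < ζ p) (hζ' : ContDiffOn ℝ 2 ζ G) : ContinuousOn (mld ζ) G :=
  (((hζ'.log fun p hp => (hζ p hp).ne').partialSnd hG (m := 1) (by norm_num)).partialFst hG
    (m := 0) (by norm_num)).continuousOn

theorem pseudoGaussianOn_of_mld_eq {G : Set (ℝ × ℝ)} (hG : IsOpen G) {ζ : ℝ × ℝ → ℝ}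
    (hζ : ∀ p ∈ G, 0 < ζ p) (hζ' : ContDiffOn ℝ 2 ζ G) {O : Set (ℝ × ℝ)} (hOG : O ⊆ G)
    (hO : IsOpen O) (hO' : Convex ℝ O) (hτ : SymmetricSet O) {ε : ℝ} {F : ℝ → ℝ}
    (hε : ε = 1 ∨ ε = -1) (hF : ContinuousOn F (Prod.fst '' O))
    (hmld : ∀ p ∈ O, mld ζ p = ε * (F p.1 * F p.2)) : PseudoGaussianOn ζ O := by
  set Λ : ℝ × ℝ → ℝ := fun p => Real.log (ζ p)
  have hΛ : ContDiffOn ℝ 2 Λ G := hζ'.log fun p hp => (hζ p hp).ne'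
  have hΛ₂ : ContDiffOn ℝ 1 (partialSnd Λ) G := hΛ.partialSnd hG (by norm_num)
  have hfst : ∀ p ∈ O, p.1 ∈ Prod.fst '' O := fun p hp => ⟨p, hp, rfl⟩
  have hsnd : ∀ p ∈ O, p.2 ∈ Prod.fst '' O := fun p hp => ⟨_, hτ.swap_mem hp, rfl⟩
  obtain ⟨H, hH⟩ := exists_forall_hasDerivAt_of_continuousOn (isOpenMap_fst O hO)
    (hO'.linear_image (LinearMap.fst ℝ ℝ ℝ)) hF
  -- `Λ - ε H(x) H(y)` has vanishing mixed partial derivative on `O`.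
  obtain ⟨A, B, hAB⟩ := exists_eq_add_of_mixed_deriv_eq_zero hO hO'
    (Φ := fun p => Λ p - ε * (H p.1 * H p.2)) (D := fun p => partialSnd Λ p - ε * (H p.1 * F p.2))
    ((hΛ₂.continuousOn.mono hOG).sub (continuousOn_const.mul (ContinuousOn.mul
      (fun p hp => ((hH _ (hfst p hp)).continuousAt.comp continuousAt_fst).continuousWithinAt)
      (fun p hp => ((hF.continuousAt ((isOpenMap_fst O hO).mem_nhds (hsnd p hp))).comp
        continuousAt_snd).continuousWithinAt))))
    (fun p hp => (hasDerivAt_partialSnd ((hΛ.contDiffAt (hG.mem_nhds (hOG hp))).differentiableAt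
      (by norm_num))).sub (((hH _ (hsnd p hp)).const_mul (H p.1)).const_mul ε))
    (fun p hp => by
      have h := (hasDerivAt_partialFst ((hΛ₂.contDiffAt (hG.mem_nhds (hOG hp))).differentiableAt
        (by norm_num))).sub (((hH _ (hfst p hp)).mul_const (F p.2)).const_mul ε)
      rwa [← mld_eq_partialFst_partialSnd, hmld p hp, sub_self] at h)
  refine ⟨fun x => Real.exp (A x), fun y => Real.exp (B y), H, ε, hε, fun p hp => ?_⟩
  rw [← Real.exp_add, ← Real.exp_add, ← hAB p hp, sub_add_cancel, Real.exp_log (hζ p (hOG hp))]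

/-- Lemma: for a positive `C²` function `ζ` on an open `G ⊆ ℝ²` and a symmetric,
open, convex `O ⊆ {∂ₓ∂_y log ζ ≠ 0}`, the restriction of `∂ₓ∂_y log ζ` to `O` is
separable and symmetric iff the restriction of `ζ` to `O` is pseudo-Gaussian. -/
theorem pseudoGaussian_characterization
    (G : Set (ℝ × ℝ)) (hG : IsOpen G)
    (ζ : ℝ × ℝ → ℝ) (hζpos : ∀ p ∈ G, 0 < ζ p)
    (hζC2 : ContDiffOn ℝ 2 ζ G)
    (O : Set (ℝ × ℝ)) (hOsub : O ⊆ {z ∈ G | mld ζ z ≠ 0})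
    (hOsymm : SymmetricSet O) (hOopen : IsOpen O) (hOconv : Convex ℝ O) :
    (SeparableOn (mld ζ) O ∧ SymmetricOn (mld ζ) O) ↔ PseudoGaussianOn ζ O := by
  have hOG : O ⊆ G := fun p hp => (hOsub hp).1
  constructor
  · rintro ⟨hsep, hsymm⟩
    obtain ⟨ε, F, hε, hF, hmld⟩ := exists_eq_sign_mul_mul_of_separableOn hOopen hOconv hOsymm
      ((continuousOn_mld hG hζpos hζC2).mono hOG) (fun p hp => (hOsub hp).2) hsep hsymm
    exact pseudoGaussianOn_of_mld_eq hG hζpos hζC2 hOG hOopen hOconv hOsymm hε hF hmld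
  · rintro ⟨f, g, h, ε, -, hrep⟩
    have hmld := mld_eq_of_eq_mul_exp hOopen (fun p hp => hζpos p (hOG hp))
      ((hζC2.differentiableOn (by norm_num)).mono hOG) hrep
    refine ⟨⟨fun x => ε * deriv h x, deriv h, hmld⟩, fun p hp => ?_⟩
    change mld ζ (p.2, p.1) = mld ζ p
    rw [hmld p hp, hmld _ (hOsymm.swap_mem hp)]
    ring
end

section
/- Let U ⊆ ℝ^d be open, and for each i ∈ {1,…,d} let φ_i : Ũ_i × Ũ_i → (0,∞) be a C² function, where Ũ_i := π_i(U), such that every φ_i is regularly non-separable and all but at most one of the φ_i are a.e. non-Gaussian. Set ξ_i := ∂_x∂_y log φ_i. Then for any continuous map B : U → GL_d(ℝ) such that the matrix Λ(u,v) := B(u)ᵀ · diag(ξ₁(u₁,v₁), …, ξ_d(u_d,v_d)) · B(v) has identically vanishing off-diagonal entries for all (u,v) ∈ U × U, it holds that B(u) ∈ M_d for every u ∈ U. -/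
/-!
Write `ξᵢ = mld (φ i)`. Since `B(u)ᵀ diag(ξᵢ(uᵢ, vᵢ)) B(v)` is diagonal, its column `j` reads
`ξᵢ(uᵢ, vᵢ) B(v)ᵢⱼ = B(u)⁻¹ⱼᵢ Λ(u, v)ⱼⱼ` for every row `i`. Suppose that column `j` of `B(u₀)` has
two nonzero entries, in rows `k ≠ l`. If `B(·)⁻¹ⱼₗ` vanished on `U`, then `ξₗ` would vanish on a
square, where `φₗ` would then be separable. Otherwise, dividing the equations of rows `k` and `l`
and moving only the `k`-th coordinates of `u` and `v` gives `ξₖ(x, y) = α(x) β(y)` on a rectangle.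
Integrating twice, `φₖ(x, y) = f(x) g(y) exp(A(x) B(y))` there, which is pseudo-Gaussian on the
product of two disjoint subintervals. Exchanging `k` and `l`, `φₗ` is pseudo-Gaussian somewhere as
well, contradicting that one of them is a.e. non-Gaussian. Hence every column of the invertible
matrix `B(u₀)` has exactly one nonzero entry, so `B(u₀)` is monomial.
-/

open MeasureTheory Set Matrix

/-- `Q` is a permutation matrix. -/
def IsPermMatrix {d : ℕ} (Q : Matrix (Fin d) (Fin d) ℝ) : Prop :=
  ∃ σ : Equiv.Perm (Fin d), ∀ i j, Q i j = if σ j = i then 1 else 0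

/-- `M` is a monomial matrix. -/
def IsMonomialMatrix {d : ℕ} (M : Matrix (Fin d) (Fin d) ℝ) : Prop :=
  ∃ (Λ : Fin d → ℝ) (Q : Matrix (Fin d) (Fin d) ℝ),
    (∀ i, Λ i ≠ 0) ∧ IsPermMatrix Q ∧ M = Matrix.diagonal Λ * Q

/-- `ζ` is strictly non-separable on `G`. -/
def StrictlyNonSeparableOn (ζ : ℝ × ℝ → ℝ) (G : Set (ℝ × ℝ)) : Prop :=
  ∀ O ⊆ G, IsOpen O → O.Nonempty → ¬ SeparableOn ζ O

/-- `ζ` is strictly non-Gaussian on `G`. -/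
def StrictlyNonGaussianOn (ζ : ℝ × ℝ → ℝ) (G : Set (ℝ × ℝ)) : Prop :=
  ∀ O ⊆ G, IsOpen O → O.Nonempty → ¬ PseudoGaussianOn ζ O

/-- `ζ` is a.e. non-separable on `G`: strictly non-separable outside a closed nullset. -/
def AENonSeparableOn (ζ : ℝ × ℝ → ℝ) (G : Set (ℝ × ℝ)) : Prop :=
  ∃ N : Set (ℝ × ℝ), IsClosed N ∧ volume N = 0 ∧ StrictlyNonSeparableOn ζ (G \ N)

/-- `ζ` is a.e. non-Gaussian on `G`: strictly non-Gaussian outside a closed nullset. -/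
def AENonGaussianOn (ζ : ℝ × ℝ → ℝ) (G : Set (ℝ × ℝ)) : Prop :=
  ∃ N : Set (ℝ × ℝ), IsClosed N ∧ volume N = 0 ∧ StrictlyNonGaussianOn ζ (G \ N)

/-- A positive `C²` function on `Ũ × Ũ` is regularly non-separable if it is
a.e. non-separable and its mixed log-derivative is a.e. nonzero on the diagonal. -/
def RegularlyNonSeparableOn (ζ : ℝ × ℝ → ℝ) (U : Set ℝ) : Prop :=
  (∀ p ∈ U ×ˢ U, 0 < ζ p) ∧ ContDiffOn ℝ 2 ζ (U ×ˢ U) ∧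
    AENonSeparableOn ζ (U ×ˢ U) ∧
    ∀ᵐ x ∂((volume : Measure ℝ).restrict U), mld ζ (x, x) ≠ 0

open Filter Topology

theorem IsOpen.nonempty_diff_of_measure_zero {X : Type*} [TopologicalSpace X] [MeasurableSpace X]
    {μ : Measure X} [μ.IsOpenPosMeasure] {O N : Set X} (hO : IsOpen O) (hne : O.Nonempty)
    (hN : μ N = 0) : (O \ N).Nonempty := by
  by_contra h
  exact hO.measure_ne_zero μ hne
    (measure_mono_null (sdiff_eq_empty.1 (not_nonempty_iff_eq_empty.1 h)) hN)

theorem exists_disjoint_nonempty_open_subsets {X : Type*} [TopologicalSpace X] [T2Space X]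
    [∀ x : X, (𝓝[≠] x).NeBot] {I J : Set X} (hI : IsOpen I) (hJ : IsOpen J) (hIne : I.Nonempty)
    (hJne : J.Nonempty) :
    ∃ I' ⊆ I, ∃ J' ⊆ J, IsOpen I' ∧ IsOpen J' ∧ I'.Nonempty ∧ J'.Nonempty ∧ Disjoint I' J' := by
  obtain ⟨x, hx⟩ := hIne
  obtain ⟨y₀, hy₀⟩ := hJne
  obtain ⟨y, hy, hyx⟩ :=
    ((infinite_of_mem_nhds y₀ (hJ.mem_nhds hy₀)).sdiff (finite_singleton x)).nonempty
  obtain ⟨u, v, hu, hv, hxu, hyv, huv⟩ := t2_separation (Ne.symm hyx)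
  exact ⟨I ∩ u, inter_subset_left, J ∩ v, inter_subset_left, hI.inter hu, hJ.inter hv,
    ⟨x, hx, hxu⟩, ⟨y, hy, hyv⟩, huv.mono inter_subset_right inter_subset_right⟩

theorem exists_hasDerivAt_of_continuousOn {I : Set ℝ} {α : ℝ → ℝ} (hI : IsOpen I)
    (hI' : IsPreconnected I) (hα : ContinuousOn α I) :
    ∃ A : ℝ → ℝ, ∀ x ∈ I, HasDerivAt A (α x) x := by
  rcases I.eq_empty_or_nonempty with rfl | ⟨x₀, hx₀⟩
  · exact ⟨0, fun x hx => absurd hx (notMem_empty x)⟩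
  refine ⟨fun x => ∫ t in x₀..x, α t, fun x hx => ?_⟩
  exact intervalIntegral.integral_hasDerivAt_right
    ((hα.mono (hI'.ordConnected.uIcc_subset hx₀ hx)).intervalIntegrable)
    (hα.stronglyMeasurableAtFilter hI x hx) (hα.continuousAt (hI.mem_nhds hx))

theorem IsOpen.eq_of_hasDerivAt_eq_zero {𝕜 E : Type*} [RCLike 𝕜] [NormedAddCommGroup E]
    [NormedSpace 𝕜 E] {s : Set 𝕜} {f : 𝕜 → E} (hs : IsOpen s) (hs' : IsPreconnected s)
    (hf : ∀ x ∈ s, HasDerivAt f 0 x) {x y : 𝕜} (hx : x ∈ s) (hy : y ∈ s) : f x = f y :=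
  hs.is_const_of_deriv_eq_zero hs' (fun z hz => (hf z hz).differentiableAt.differentiableWithinAt)
    (fun z hz => (hf z hz).deriv) hx hy

section PartialDerivatives

variable {𝕜 E : Type*} [NontriviallyNormedField 𝕜] [NormedAddCommGroup E] [NormedSpace 𝕜 E]

theorem DifferentiableAt.differentiableAt_snd_slice {F : 𝕜 × 𝕜 → E} {x y : 𝕜}
    (hF : DifferentiableAt 𝕜 F (x, y)) : DifferentiableAt 𝕜 (fun y' => F (x, y')) y :=
  hF.comp y (differentiableAt_const x |>.prodMk differentiableAt_id)

theorem ContDiffAt.differentiableAt_deriv_snd_slice {F : 𝕜 × 𝕜 → E} {x y : 𝕜}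
    (hF : ContDiffAt 𝕜 2 F (x, y)) :
    DifferentiableAt 𝕜 (fun x' => deriv (fun y' => F (x', y')) y) x := by
  have hslice : ∀ᶠ x' in 𝓝 x, deriv (fun y' => F (x', y')) y = fderiv 𝕜 F (x', y) (0, 1) := by
    have hcont : ContinuousAt (fun x' : 𝕜 => (x', y)) x := by fun_prop
    filter_upwards [hcont.eventually (hF.eventually (by simp))] with x' hx'
    exact ((hx'.differentiableAt two_ne_zero).hasFDerivAt.comp_hasDerivAt y
      ((hasDerivAt_const y x').prodMk (hasDerivAt_id y))).deriv
  refine DifferentiableAt.congr_of_eventuallyEq ?_ hslice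
  have hF' : DifferentiableAt 𝕜 (fderiv 𝕜 F) (x, y) :=
    (hF.fderiv_right (m := 1) (by norm_num)).differentiableAt one_ne_zero
  exact (hF'.comp x (differentiableAt_id.prodMk (differentiableAt_const y))).clm_apply
    (differentiableAt_const _)

end PartialDerivatives

theorem sub_sub_add_eq_mul_of_deriv_deriv_eq {F : ℝ × ℝ → ℝ} {I J : Set ℝ} {A B α β : ℝ → ℝ}
    (hI : IsOpen I) (hI' : IsPreconnected I) (hJ : IsOpen J) (hJ' : IsPreconnected J)
    (hF : ContDiffOn ℝ 2 F (I ×ˢ J)) (hA : ∀ x ∈ I, HasDerivAt A (α x) x)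
    (hB : ∀ y ∈ J, HasDerivAt B (β y) y)
    (hmixed : ∀ x ∈ I, ∀ y ∈ J,
      deriv (fun x' => deriv (fun y' => F (x', y')) y) x = α x * β y)
    {x₀ x y₀ y : ℝ} (hx₀ : x₀ ∈ I) (hx : x ∈ I) (hy₀ : y₀ ∈ J) (hy : y ∈ J) :
    F (x, y) - F (x, y₀) - F (x₀, y) + F (x₀, y₀) = (A x - A x₀) * (B y - B y₀) := by
  have hF2 : ∀ x ∈ I, ∀ y ∈ J, ContDiffAt ℝ 2 F (x, y) := fun x hx y hy =>
    hF.contDiffAt ((hI.prod hJ).mem_nhds ⟨hx, hy⟩)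
  have hslice : ∀ x ∈ I, ∀ y ∈ J,
      HasDerivAt (fun y' => F (x, y')) (deriv (fun y' => F (x, y')) y) y := fun x hx y hy =>
    ((hF2 x hx y hy).differentiableAt two_ne_zero).differentiableAt_snd_slice.hasDerivAt
  have hfirst : ∀ y ∈ J, ∀ x ∈ I, deriv (fun y' => F (x, y')) y - A x * β y =
      deriv (fun y' => F (x₀, y')) y - A x₀ * β y := by
    refine fun y hy x hx => hI.eq_of_hasDerivAt_eq_zero hI'
      (f := fun x' => deriv (fun y' => F (x', y')) y - A x' * β y) (fun x' hx' => ?_) hx hx₀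
    have hd := (hF2 x' hx' y hy).differentiableAt_deriv_snd_slice.hasDerivAt
    rw [hmixed x' hx' y hy] at hd
    exact (hd.fun_sub ((hA x' hx').mul_const (β y))).congr_deriv (sub_self _)
  have hsecond : F (x, y) - F (x₀, y) - (A x - A x₀) * B y =
      F (x, y₀) - F (x₀, y₀) - (A x - A x₀) * B y₀ := by
    refine hJ.eq_of_hasDerivAt_eq_zero hJ'
      (f := fun y' => F (x, y') - F (x₀, y') - (A x - A x₀) * B y') (fun y' hy' => ?_) hy hy₀
    have hd := ((hslice x hx y' hy').fun_sub (hslice x₀ hx₀ y' hy')).fun_sub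
      ((hB y' hy').const_mul (A x - A x₀))
    exact hd.congr_deriv (by linear_combination hfirst y' hy' x hx)
  linear_combination hsecond

namespace Matrix

variable {n R : Type*} [Fintype n] [DecidableEq n] [CommRing R]

theorem exists_perm_forall_ne_zero_of_det_ne_zero {M : Matrix n n R} (hM : M.det ≠ 0) :
    ∃ σ : Equiv.Perm n, ∀ j, M (σ j) j ≠ 0 := by
  rw [det_apply] at hM
  obtain ⟨σ, -, hσ⟩ := Finset.exists_ne_zero_of_sum_ne_zero hM
  refine ⟨σ, fun j hj => hσ ?_⟩
  rw [Finset.prod_eq_zero (f := fun i => M (σ i) i) (Finset.mem_univ j) hj, smul_zero]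

theorem IsDiag.diagonal_mul_apply {B C : Matrix n n R} {D : n → R} (hB : IsUnit B.det)
    (h : (Bᵀ * diagonal D * C).IsDiag) (k j : n) :
    D k * C k j = B⁻¹ j k * (Bᵀ * diagonal D * C) j j := by
  have hBt : IsUnit Bᵀ.det := by rwa [det_transpose]
  have : diagonal D * C = B⁻¹ᵀ * diagonal (diag (Bᵀ * diagonal D * C)) := by
    rw [h.diagonal_diag, transpose_nonsing_inv, Matrix.mul_assoc Bᵀ, ← Matrix.mul_assoc,
      nonsing_inv_mul _ hBt, Matrix.one_mul]
  simpa [diagonal_mul, mul_diagonal] using congrFun₂ this k j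

end Matrix

theorem ContinuousOn.matrix_inv {X n 𝕜 : Type*} [TopologicalSpace X] [Fintype n] [DecidableEq n]
    [Field 𝕜] [TopologicalSpace 𝕜] [IsTopologicalRing 𝕜] [ContinuousInv₀ 𝕜]
    {B : X → Matrix n n 𝕜} {U : Set X} (hB : ContinuousOn B U) (hdet : ∀ u ∈ U, (B u).det ≠ 0) :
    ContinuousOn (fun u => (B u)⁻¹) U := by
  intro u hu
  have hdet' : ContinuousAt Ring.inverse (B u).det := by
    rw [Ring.inverse_eq_inv']
    exact continuousAt_inv₀ (hdet u hu)
  exact (continuousAt_matrix_inv _ hdet').comp_continuousWithinAt (hB u hu)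

theorem isMonomialMatrix_of_det_ne_zero {d : ℕ} {M : Matrix (Fin d) (Fin d) ℝ} (hM : M.det ≠ 0)
    (hcol : ∀ j k l, M k j ≠ 0 → M l j ≠ 0 → k = l) : IsMonomialMatrix M := by
  obtain ⟨σ, hσ⟩ := Matrix.exists_perm_forall_ne_zero_of_det_ne_zero hM
  refine ⟨fun i => M i (σ.symm i), Matrix.of fun i j => if σ j = i then 1 else 0,
    fun i => by simpa using hσ (σ.symm i), ⟨σ, fun _ _ => rfl⟩, ?_⟩
  ext i j
  rw [Matrix.diagonal_mul, Matrix.of_apply]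
  by_cases h : σ j = i
  · subst h
    simp
  · rw [if_neg h, mul_zero]
    by_contra hij
    exact h (hcol j _ _ (hσ j) hij)

theorem SeparableOn.mono {ζ : ℝ × ℝ → ℝ} {G O : Set (ℝ × ℝ)} (h : SeparableOn ζ G)
    (hOG : O ⊆ G) : SeparableOn ζ O :=
  let ⟨f, g, hfg⟩ := h
  ⟨f, g, fun p hp => hfg p (hOG hp)⟩

theorem PseudoGaussianOn.mono {ζ : ℝ × ℝ → ℝ} {G O : Set (ℝ × ℝ)} (h : PseudoGaussianOn ζ G)
    (hOG : O ⊆ G) : PseudoGaussianOn ζ O :=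
  let ⟨f, g, h, ε, hε, hfg⟩ := h
  ⟨f, g, h, ε, hε, fun p hp => hfg p (hOG hp)⟩

theorem AENonSeparableOn.not_separableOn {ζ : ℝ × ℝ → ℝ} {G O : Set (ℝ × ℝ)}
    (h : AENonSeparableOn ζ G) (hOG : O ⊆ G) (hO : IsOpen O) (hne : O.Nonempty) :
    ¬ SeparableOn ζ O := fun hsep =>
  let ⟨N, hNc, hN, hstrict⟩ := h
  hstrict (O \ N) (sdiff_subset_sdiff_left hOG) (hO.sdiff hNc)
    (hO.nonempty_diff_of_measure_zero hne hN)
    (hsep.mono sdiff_subset)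

theorem AENonGaussianOn.not_pseudoGaussianOn {ζ : ℝ × ℝ → ℝ} {G O : Set (ℝ × ℝ)}
    (h : AENonGaussianOn ζ G) (hOG : O ⊆ G) (hO : IsOpen O) (hne : O.Nonempty) :
    ¬ PseudoGaussianOn ζ O := fun hpg =>
  let ⟨N, hNc, hN, hstrict⟩ := h
  hstrict (O \ N) (sdiff_subset_sdiff_left hOG) (hO.sdiff hNc)
    (hO.nonempty_diff_of_measure_zero hne hN)
    (hpg.mono sdiff_subset)

theorem pseudoGaussianOn_prod_of_disjoint {ζ : ℝ × ℝ → ℝ} {I J : Set ℝ} {f g A B : ℝ → ℝ}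
    (hIJ : Disjoint I J) (h : ∀ x ∈ I, ∀ y ∈ J, ζ (x, y) = f x * g y * Real.exp (A x * B y)) :
    PseudoGaussianOn ζ (I ×ˢ J) := by
  classical
  refine ⟨f, g, I.piecewise A B, 1, Or.inl rfl, ?_⟩
  rintro ⟨x, y⟩ ⟨hx, hy⟩
  rw [h x hx y hy, piecewise_eq_of_mem _ _ _ hx,
    piecewise_eq_of_notMem _ _ _ (hIJ.notMem_of_mem_right hy), one_mul]

theorem eq_mul_mul_exp_of_mld_eq {ζ : ℝ × ℝ → ℝ} {I J : Set ℝ} {A B α β : ℝ → ℝ}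
    (hI : IsOpen I) (hI' : IsPreconnected I) (hJ : IsOpen J) (hJ' : IsPreconnected J)
    (hpos : ∀ p ∈ I ×ˢ J, 0 < ζ p) (hζ : ContDiffOn ℝ 2 ζ (I ×ˢ J))
    (hA : ∀ x ∈ I, HasDerivAt A (α x) x) (hB : ∀ y ∈ J, HasDerivAt B (β y) y)
    (hmld : ∀ x ∈ I, ∀ y ∈ J, mld ζ (x, y) = α x * β y)
    {x₀ x y₀ y : ℝ} (hx₀ : x₀ ∈ I) (hx : x ∈ I) (hy₀ : y₀ ∈ J) (hy : y ∈ J) :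
    ζ (x, y) = ζ (x, y₀) * (ζ (x₀, y) / ζ (x₀, y₀)) * Real.exp ((A x - A x₀) * (B y - B y₀)) := by
  have hlog := sub_sub_add_eq_mul_of_deriv_deriv_eq hI hI' hJ hJ'
    (hζ.log fun p hp => (hpos p hp).ne') hA hB hmld hx₀ hx hy₀ hy
  have hlog' : Real.log (ζ (x, y)) = Real.log (ζ (x, y₀)) +
      (Real.log (ζ (x₀, y)) - Real.log (ζ (x₀, y₀))) + (A x - A x₀) * (B y - B y₀) := by
    linear_combination hlog
  rw [← Real.exp_log (hpos _ ⟨hx, hy⟩), hlog', Real.exp_add, Real.exp_add, Real.exp_sub,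
    Real.exp_log (hpos _ ⟨hx, hy₀⟩), Real.exp_log (hpos _ ⟨hx₀, hy⟩),
    Real.exp_log (hpos _ ⟨hx₀, hy₀⟩)]

theorem separableOn_of_mld_eq_zero {ζ : ℝ × ℝ → ℝ} {I J : Set ℝ} (hI : IsOpen I)
    (hI' : IsPreconnected I) (hJ : IsOpen J) (hJ' : IsPreconnected J) (hne : (I ×ˢ J).Nonempty)
    (hpos : ∀ p ∈ I ×ˢ J, 0 < ζ p) (hζ : ContDiffOn ℝ 2 ζ (I ×ˢ J))
    (hmld : ∀ x ∈ I, ∀ y ∈ J, mld ζ (x, y) = 0) : SeparableOn ζ (I ×ˢ J) := by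
  obtain ⟨⟨x₀, y₀⟩, hx₀, hy₀⟩ := hne
  refine ⟨fun x => ζ (x, y₀), fun y => ζ (x₀, y) / ζ (x₀, y₀), ?_⟩
  rintro ⟨x, y⟩ ⟨hx, hy⟩
  simpa using eq_mul_mul_exp_of_mld_eq hI hI' hJ hJ' hpos hζ (A := 0) (B := 0) (α := 0) (β := 0)
    (fun x _ => hasDerivAt_const x 0) (fun y _ => hasDerivAt_const y 0) (by simpa using hmld)
    hx₀ hx hy₀ hy

theorem exists_pseudoGaussianOn_of_mld_eq_mul {ζ : ℝ × ℝ → ℝ} {I J : Set ℝ} {α β : ℝ → ℝ}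
    (hI : IsOpen I) (hI' : IsPreconnected I) (hJ : IsOpen J) (hJ' : IsPreconnected J)
    (hIne : I.Nonempty) (hJne : J.Nonempty) (hpos : ∀ p ∈ I ×ˢ J, 0 < ζ p)
    (hζ : ContDiffOn ℝ 2 ζ (I ×ˢ J)) (hα : ContinuousOn α I) (hβ : ContinuousOn β J)
    (hmld : ∀ x ∈ I, ∀ y ∈ J, mld ζ (x, y) = α x * β y) :
    ∃ O ⊆ I ×ˢ J, IsOpen O ∧ O.Nonempty ∧ PseudoGaussianOn ζ O := by
  obtain ⟨x₀, hx₀⟩ := hIne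
  obtain ⟨y₀, hy₀⟩ := hJne
  obtain ⟨A, hA⟩ := exists_hasDerivAt_of_continuousOn hI hI' hα
  obtain ⟨B, hB⟩ := exists_hasDerivAt_of_continuousOn hJ hJ' hβ
  obtain ⟨I', hI'I, J', hJ'J, hI'o, hJ'o, hI'ne, hJ'ne, hdisj⟩ :=
    exists_disjoint_nonempty_open_subsets hI hJ ⟨x₀, hx₀⟩ ⟨y₀, hy₀⟩
  refine ⟨I' ×ˢ J', prod_mono hI'I hJ'J, hI'o.prod hJ'o, hI'ne.prod hJ'ne,
    pseudoGaussianOn_prod_of_disjoint hdisj (f := fun x => ζ (x, y₀))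
      (g := fun y => ζ (x₀, y) / ζ (x₀, y₀)) (A := fun x => A x - A x₀) (B := fun y => B y - B y₀)
      fun x hx y hy => ?_⟩
  exact eq_mul_mul_exp_of_mld_eq hI hI' hJ hJ' hpos hζ hA hB hmld hx₀ (hI'I hx) hy₀ (hJ'J hy)

section Slices

variable {ι : Type*} [DecidableEq ι] {U : Set (ι → ℝ)}

theorem IsOpen.exists_isPreconnected_update_mem (hU : IsOpen U) {w : ι → ℝ} (hw : w ∈ U)
    (m : ι) : ∃ I : Set ℝ, IsOpen I ∧ IsPreconnected I ∧ w m ∈ I ∧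
      ∀ t ∈ I, Function.update w m t ∈ U := by
  have hw' : Continuous (Function.update w m) := continuous_const.update m continuous_id
  obtain ⟨r, hr, hball⟩ := Metric.isOpen_iff.1 (hU.preimage hw') (w m)
    (by rwa [mem_preimage, Function.update_eq_self])
  exact ⟨Metric.ball (w m) r, Metric.isOpen_ball, (convex_ball _ _).isPreconnected,
    Metric.mem_ball_self hr, fun t ht => hball ht⟩

theorem exists_ne_zero_of_aeNonSeparableOn (hU : IsOpen U) {ζ : ℝ × ℝ → ℝ} {m : ι}
    (hpos : ∀ p ∈ ((fun y => y m) '' U) ×ˢ ((fun y => y m) '' U), 0 < ζ p)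
    (hζ : ContDiffOn ℝ 2 ζ (((fun y => y m) '' U) ×ˢ ((fun y => y m) '' U)))
    (hsep : AENonSeparableOn ζ (((fun y => y m) '' U) ×ˢ ((fun y => y m) '' U)))
    {b x : (ι → ℝ) → ℝ} {c : (ι → ℝ) → (ι → ℝ) → ℝ} (hb : ContinuousOn b U)
    (hbxc : ∀ u ∈ U, ∀ v ∈ U, mld ζ (u m, v m) * b v = x u * c u v) {w : ι → ℝ} (hw : w ∈ U)
    (hbw : b w ≠ 0) : ∃ u ∈ U, x u ≠ 0 := by
  by_contra! hx
  obtain ⟨I, hIo, hIc, hwI, hI⟩ :=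
    (hb.isOpen_inter_preimage hU isOpen_compl_singleton).exists_isPreconnected_update_mem
      ⟨hw, hbw⟩ m
  have hIU : I ×ˢ I ⊆ ((fun y => y m) '' U) ×ˢ ((fun y => y m) '' U) :=
    have h : I ⊆ (fun y => y m) '' U := fun t ht => ⟨_, (hI t ht).1, Function.update_self m t w⟩
    prod_mono h h
  refine hsep.not_separableOn hIU (hIo.prod hIo) ⟨(w m, w m), hwI, hwI⟩
    (separableOn_of_mld_eq_zero hIo hIc hIo hIc ⟨(w m, w m), hwI, hwI⟩
      (fun p hp => hpos p (hIU hp)) (hζ.mono hIU) fun s hs t ht => ?_)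
  have h := hbxc _ (hI s hs).1 _ (hI t ht).1
  rw [hx _ (hI s hs).1, zero_mul, Function.update_self, Function.update_self] at h
  exact (mul_eq_zero.1 h).resolve_right (hI t ht).2

theorem exists_pseudoGaussianOn_of_ne_zero (hU : IsOpen U) {φ : ι → ℝ × ℝ → ℝ} {k l : ι}
    (hkl : k ≠ l) (hpos : ∀ p ∈ ((fun y => y k) '' U) ×ˢ ((fun y => y k) '' U), 0 < φ k p)
    (hφ : ContDiffOn ℝ 2 (φ k) (((fun y => y k) '' U) ×ˢ ((fun y => y k) '' U)))
    {b x : ι → (ι → ℝ) → ℝ} {c : (ι → ℝ) → (ι → ℝ) → ℝ} (hb : ∀ i, ContinuousOn (b i) U)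
    (hx : ∀ i, ContinuousOn (x i) U)
    (hbxc : ∀ u ∈ U, ∀ v ∈ U, ∀ i, mld (φ i) (u i, v i) * b i v = x i u * c u v)
    {u v : ι → ℝ} (hu : u ∈ U) (hxu : x l u ≠ 0) (hv : v ∈ U) (hbv : b k v ≠ 0) :
    ∃ O ⊆ ((fun y => y k) '' U) ×ˢ ((fun y => y k) '' U), IsOpen O ∧ O.Nonempty ∧
      PseudoGaussianOn (φ k) O := by
  obtain ⟨I, hIo, hIc, huI, hI⟩ :=
    ((hx l).isOpen_inter_preimage hU isOpen_compl_singleton).exists_isPreconnected_update_mem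
      ⟨hu, hxu⟩ k
  obtain ⟨J, hJo, hJc, hvJ, hJ⟩ :=
    ((hb k).isOpen_inter_preimage hU isOpen_compl_singleton).exists_isPreconnected_update_mem
      ⟨hv, hbv⟩ k
  have hIJU : I ×ˢ J ⊆ ((fun y => y k) '' U) ×ˢ ((fun y => y k) '' U) :=
    prod_mono (fun s hs => ⟨_, (hI s hs).1, Function.update_self k s u⟩)
      (fun t ht => ⟨_, (hJ t ht).1, Function.update_self k t v⟩)
  have hu' : Continuous (Function.update u k) := continuous_const.update k continuous_id
  have hv' : Continuous (Function.update v k) := continuous_const.update k continuous_id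
  have hfac : ∀ s ∈ I, ∀ t ∈ J, mld (φ k) (s, t) =
      mld (φ l) (u l, v l) * x k (Function.update u k s) / x l (Function.update u k s) *
        (b l (Function.update v k t) / b k (Function.update v k t)) := by
    intro s hs t ht
    have hk := hbxc _ (hI s hs).1 _ (hJ t ht).1 k
    have hl := hbxc _ (hI s hs).1 _ (hJ t ht).1 l
    rw [Function.update_self, Function.update_self] at hk
    rw [Function.update_of_ne hkl.symm, Function.update_of_ne hkl.symm] at hl
    have hxs : x l (Function.update u k s) ≠ 0 := (hI s hs).2
    have hbt : b k (Function.update v k t) ≠ 0 := (hJ t ht).2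
    rw [div_mul_div_comm, eq_div_iff (mul_ne_zero hxs hbt)]
    linear_combination x l (Function.update u k s) * hk - x k (Function.update u k s) * hl
  obtain ⟨O, hO, hOo, hOne, hOpg⟩ := exists_pseudoGaussianOn_of_mld_eq_mul hIo hIc hJo hJc
    ⟨_, huI⟩ ⟨_, hvJ⟩ (fun p hp => hpos p (hIJU hp)) (hφ.mono hIJU)
    ((continuousOn_const.mul ((hx k).comp hu'.continuousOn fun s hs => (hI s hs).1)).div
      ((hx l).comp hu'.continuousOn fun s hs => (hI s hs).1) fun s hs => (hI s hs).2)
    (((hb l).comp hv'.continuousOn fun t ht => (hJ t ht).1).div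
      ((hb k).comp hv'.continuousOn fun t ht => (hJ t ht).1) fun t ht => (hJ t ht).2) hfac
  exact ⟨O, hO.trans hIJU, hOo, hOne, hOpg⟩

theorem not_aeNonGaussianOn_of_ne_zero_of_ne_zero (hU : IsOpen U) {φ : ι → ℝ × ℝ → ℝ}
    (hφ : ∀ i, RegularlyNonSeparableOn (φ i) ((fun y => y i) '' U))
    {b x : ι → (ι → ℝ) → ℝ} {c : (ι → ℝ) → (ι → ℝ) → ℝ} (hb : ∀ i, ContinuousOn (b i) U)
    (hx : ∀ i, ContinuousOn (x i) U)
    (hbxc : ∀ u ∈ U, ∀ v ∈ U, ∀ i, mld (φ i) (u i, v i) * b i v = x i u * c u v)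
    {k l : ι} (hkl : k ≠ l) {w : ι → ℝ} (hw : w ∈ U) (hbk : b k w ≠ 0) (hbl : b l w ≠ 0) :
    ¬ AENonGaussianOn (φ k) (((fun y => y k) '' U) ×ˢ ((fun y => y k) '' U)) := by
  obtain ⟨u, hu, hxu⟩ := exists_ne_zero_of_aeNonSeparableOn hU (hφ l).1 (hφ l).2.1 (hφ l).2.2.1
    (hb l) (fun u hu v hv => hbxc u hu v hv l) hw hbl
  obtain ⟨O, hO, hOo, hOne, hOpg⟩ :=
    exists_pseudoGaussianOn_of_ne_zero hU hkl (hφ k).1 (hφ k).2.1 hb hx hbxc hu hxu hw hbk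
  exact fun h => h.not_pseudoGaussianOn hO hOo hOne hOpg

end Slices

theorem contrast_diagonalization_monomial_general {d : ℕ}
    (U : Set (Fin d → ℝ)) (hU : IsOpen U)
    (φ : Fin d → ℝ × ℝ → ℝ)
    (hφreg : ∀ i, RegularlyNonSeparableOn (φ i) ((fun y => y i) '' U))
    (hφgauss : ∀ i j, i ≠ j →
      AENonGaussianOn (φ i) (((fun y => y i) '' U) ×ˢ ((fun y => y i) '' U)) ∨
      AENonGaussianOn (φ j) (((fun y => y j) '' U) ×ˢ ((fun y => y j) '' U)))
    (B : (Fin d → ℝ) → Matrix (Fin d) (Fin d) ℝ)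
    (hBcont : ContinuousOn B U)
    (hBinv : ∀ u ∈ U, IsUnit (B u).det)
    (hΛ : ∀ u ∈ U, ∀ v ∈ U, ∀ i j, i ≠ j →
      ((B u)ᵀ * Matrix.diagonal (fun k => mld (φ k) (u k, v k)) * B v) i j = 0) :
    ∀ u ∈ U, IsMonomialMatrix (B u) := by
  intro u₀ hu₀
  have hinv := hBcont.matrix_inv fun u hu => (hBinv u hu).ne_zero
  have key : ∀ j k l, k ≠ l → B u₀ k j ≠ 0 → B u₀ l j ≠ 0 →
      ¬ AENonGaussianOn (φ k) (((fun y => y k) '' U) ×ˢ ((fun y => y k) '' U)) :=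
    fun j k l hkl hk hl => not_aeNonGaussianOn_of_ne_zero_of_ne_zero hU hφreg
      (b := fun i v => B v i j) (x := fun i u => (B u)⁻¹ j i)
      (fun i => (continuous_id.matrix_elem i j).comp_continuousOn hBcont)
      (fun i => (continuous_id.matrix_elem j i).comp_continuousOn hinv)
      (fun u hu v hv i => Matrix.IsDiag.diagonal_mul_apply (hBinv u hu)
        (fun i' j' hij => hΛ u hu v hv i' j' hij) i j) hkl hu₀ hk hl
  refine isMonomialMatrix_of_det_ne_zero (hBinv u₀ hu₀).ne_zero fun j k l hk hl => ?_
  by_contra hkl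
  rcases hφgauss k l hkl with h | h
  exacts [key j k l hkl hk hl h, key j l k (Ne.symm hkl) hl hk h]

/-- Lemma: if `B : U → GL_d(ℝ)` is continuous and
`B(u)ᵀ · diag(ξᵢ(uᵢ,vᵢ)) · B(v)` has vanishing off-diagonal entries for all
`(u,v) ∈ U × U`, where `ξᵢ = ∂ₓ∂_y log φᵢ` for regularly non-separable `φᵢ`,
all but at most one of which are a.e. non-Gaussian, then every `B(u)` is monomial. -/
theorem contrast_diagonalization_monomial {d : ℕ}
    (U : Set (Fin d → ℝ)) (hU : IsOpen U)
    (φ : Fin d → ℝ × ℝ → ℝ)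
    (hφpos : ∀ i, ∀ p ∈ ((fun y => y i) '' U) ×ˢ ((fun y => y i) '' U), 0 < φ i p)
    (hφC2 : ∀ i, ContDiffOn ℝ 2 (φ i) (((fun y => y i) '' U) ×ˢ ((fun y => y i) '' U)))
    (hφreg : ∀ i, RegularlyNonSeparableOn (φ i) ((fun y => y i) '' U))
    (hφgauss : ∀ i j, i ≠ j →
      AENonGaussianOn (φ i) (((fun y => y i) '' U) ×ˢ ((fun y => y i) '' U)) ∨
      AENonGaussianOn (φ j) (((fun y => y j) '' U) ×ˢ ((fun y => y j) '' U)))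
    (B : (Fin d → ℝ) → Matrix (Fin d) (Fin d) ℝ)
    (hBcont : ContinuousOn B U)
    (hBinv : ∀ u ∈ U, IsUnit (B u).det)
    (hΛ : ∀ u ∈ U, ∀ v ∈ U, ∀ i j, i ≠ j →
      ((B u)ᵀ * Matrix.diagonal (fun k => mld (φ k) (u k, v k)) * B v) i j = 0) :
    ∀ u ∈ U, IsMonomialMatrix (B u) :=
  contrast_diagonalization_monomial_general U hU φ hφreg hφgauss B hBcont hBinv hΛ
end
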